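/- With the same setup, j^*(I) = I'' and I'' = { α'' a morphism of T'' | j_!(α'') ∈ I }, where I = { α | i^*(α) ∈ I', j^*(α) ∈ I'' }. -/

import Mathlib

/-!
Since `j^* j_! ≅ Id`, the morphism `j^*(j_! f)` is `f` conjugated by isomorphisms, and
`i^*(j_! f) = 0` because its source is zero; so `j_! f ∈ I` exactly when `f ∈ I''`. This gives
`I'' ⊆ j^*(I)` with witness `j_! f`, while `j^*(I) ⊆ I''` holds because `I''` is an ideal.
-/

open CategoryTheory Category Limits

/-- A class of morphisms in a category. -/
abbrev MorphismClass (C : Type*) [Category C] := ∀ ⦃X Y : C⦄, (X ⟶ Y) → Prop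

/-- An ideal of a preadditive category: an additive subgroup of each Hom-group, closed
under arbitrary pre- and post-composition. -/
structure CatIdeal (C : Type*) [Category C] [Preadditive C] where
  mem : MorphismClass C
  zero_mem : ∀ (X Y : C), mem (0 : X ⟶ Y)
  neg_mem : ∀ ⦃X Y : C⦄ ⦃f : X ⟶ Y⦄, mem f → mem (-f)
  add_mem : ∀ ⦃X Y : C⦄ ⦃f g : X ⟶ Y⦄, mem f → mem g → mem (f + g)
  comp_mem : ∀ ⦃W X Y Z : C⦄ (h : W ⟶ X) ⦃f : X ⟶ Y⦄ (k : Y ⟶ Z),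
    mem f → mem (h ≫ f ≫ k)

/-- The image ideal `F(I)`: all morphisms of the form `g ≫ F(α) ≫ h` with `α ∈ I`. -/
def imageMem {C D : Type*} [Category C] [Category D] (F : C ⥤ D)
    (I : MorphismClass C) : MorphismClass D :=
  fun A B f => ∃ (X Y : C) (α : X ⟶ Y) (g : A ⟶ F.obj X) (h : F.obj Y ⟶ B),
    I α ∧ f = g ≫ F.map α ≫ h

/-- The glued morphism class `I = {α | i^*(α) ∈ I', j^*(α) ∈ I''}`. -/
def glueMem {T' T T'' : Type*} [Category T'] [Category T] [Category T'']
    [Preadditive T'] [Preadditive T'']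
    (iUpper : T ⥤ T') (jUpper : T ⥤ T'')
    (I' : CatIdeal T') (I'' : CatIdeal T'') : MorphismClass T :=
  fun _ _ f => I'.mem (iUpper.map f) ∧ I''.mem (jUpper.map f)

namespace CatIdeal

variable {C : Type*} [Category C] [Preadditive C] (I : CatIdeal C)

theorem mem_iso_comp_comp_iff {X X' Y Y' : C} (a : X' ≅ X) (f : X ⟶ Y) (b : Y ≅ Y') :
    I.mem (a.hom ≫ f ≫ b.hom) ↔ I.mem f := by
  refine ⟨fun h => ?_, I.comp_mem _ _⟩
  simpa using I.comp_mem a.inv b.inv h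

theorem mem_of_imageMem {D : Type*} [Category D] {F : D ⥤ C} {P : MorphismClass D}
    (hP : ∀ ⦃X Y : D⦄ (α : X ⟶ Y), P α → I.mem (F.map α)) {A B : C} {f : A ⟶ B}
    (hf : imageMem F P f) : I.mem f := by
  obtain ⟨X, Y, α, g, h, hα, rfl⟩ := hf
  exact I.comp_mem g h (hP α hα)

end CatIdeal

theorem imageMem_of_map_section {C D : Type*} [Category C] [Category D] {F : C ⥤ D}
    {G : D ⥤ C} (e : F ⋙ G ≅ 𝟭 C) {P : MorphismClass D} {X Y : C} {f : X ⟶ Y}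
    (hf : P (F.map f)) : imageMem G P f :=
  ⟨_, _, F.map f, e.inv.app X, e.hom.app Y, hf, (NatIso.naturality_1 e f).symm⟩

theorem glueMem_map_iff {T' T T'' : Type*} [Category T'] [Category T] [Category T'']
    [Preadditive T'] [Preadditive T''] {iUpper : T ⥤ T'} {jShriek : T'' ⥤ T}
    {jUpper : T ⥤ T''} (e : jShriek ⋙ jUpper ≅ 𝟭 T'')
    (h : ∀ X : T'', IsZero (iUpper.obj (jShriek.obj X))) (I' : CatIdeal T') (I'' : CatIdeal T'')
    ⦃X Y : T''⦄ (f : X ⟶ Y) :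
    glueMem iUpper jUpper I' I'' (jShriek.map f) ↔ I''.mem f := by
  have hi : iUpper.map (jShriek.map f) = 0 := (h X).eq_of_src _ _
  have hj : jUpper.map (jShriek.map f) = (e.app X).hom ≫ f ≫ (e.app Y).inv :=
    (NatIso.naturality_2 e f).symm
  rw [glueMem, hi, hj]
  exact (and_iff_right (I'.zero_mem _ _)).trans (I''.mem_iso_comp_comp_iff _ f (e.app Y).symm)

theorem stmt4_general {T' T T'' : Type*} [Category T'] [Category T] [Category T'']
    [Preadditive T'] [Preadditive T'']
    (iUpper : T ⥤ T') (jShriek : T'' ⥤ T) (jUpper : T ⥤ T'')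
    (e₂ : jShriek ⋙ jUpper ≅ 𝟭 T'')
    (h₂ : ∀ X : T'', IsZero (iUpper.obj (jShriek.obj X)))
    (I' : CatIdeal T') (I'' : CatIdeal T'') :
    (∀ ⦃X Y : T''⦄ (f : X ⟶ Y),
        imageMem jUpper (glueMem iUpper jUpper I' I'') f ↔ I''.mem f) ∧
    (∀ ⦃X Y : T''⦄ (f : X ⟶ Y),
        I''.mem f ↔ glueMem iUpper jUpper I' I'' (jShriek.map f)) := by
  have hglue := glueMem_map_iff e₂ h₂ I' I''
  refine ⟨fun X Y f => ⟨I''.mem_of_imageMem fun _ _ _ hα => hα.2, fun hf => ?_⟩,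
    fun X Y f => (hglue f).symm⟩
  exact imageMem_of_map_section e₂ ((hglue f).2 hf)

/-- With `I = {α | i^*(α) ∈ I', j^*(α) ∈ I''}`, one has `j^*(I) = I''` (image ideal) and
`I'' = {α'' | j_!(α'') ∈ I}`. -/
theorem stmt4 {T' T T'' : Type*} [Category T'] [Category T] [Category T'']
    [Preadditive T'] [Preadditive T] [Preadditive T'']
    (iStar : T' ⥤ T) (iUpper : T ⥤ T') (jShriek : T'' ⥤ T) (jUpper : T ⥤ T'')
    [iStar.Additive] [iUpper.Additive] [jShriek.Additive] [jUpper.Additive]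
    (e₁ : iStar ⋙ iUpper ≅ 𝟭 T') (e₂ : jShriek ⋙ jUpper ≅ 𝟭 T'')
    (h₁ : ∀ X : T', IsZero (jUpper.obj (iStar.obj X)))
    (h₂ : ∀ X : T'', IsZero (iUpper.obj (jShriek.obj X)))
    (I' : CatIdeal T') (I'' : CatIdeal T'') :
    (∀ ⦃X Y : T''⦄ (f : X ⟶ Y),
        imageMem jUpper (glueMem iUpper jUpper I' I'') f ↔ I''.mem f) ∧
    (∀ ⦃X Y : T''⦄ (f : X ⟶ Y),
        I''.mem f ↔ glueMem iUpper jUpper I' I'' (jShriek.map f)) :=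
  stmt4_general iUpper jShriek jUpper e₂ h₂ I' I''
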